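/- The Sugeno integral is unchanged when the upper Möbius transform m^* = v is replaced by the lower Möbius transform m_*: sup_{A ⊆ N} ( (inf_{i∈A} f_i) ∧ v(A) ) = sup_{A ⊆ N} ( (inf_{i∈A} f_i) ∧ m_*(A) ), where m_*(A) = v(A) if v(A) > v(A∖{j}) for all j ∈ A, and 0 otherwise. -/

import Mathlib

/-!
Every set `A` contains a set `B` that is minimal among the subsets of `A` with `v A ≤ v B`.
Removing any point of `B` strictly lowers `v`, so `m_*(B) = v(B) ≥ v(A)`, while `inf_B f ≥ inf_A f`;
hence each term of the `v`-integral is dominated by a term of the `m_*`-integral. The reverse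
inequality is `m_* ≤ v`.
-/

/-- The lower ordinal Möbius transform of a set function. -/
def mstar {N : Type*} [Fintype N] [DecidableEq N] {L : Type*} [LinearOrder L] [OrderBot L]
    (v : Finset N → L) (A : Finset N) : L :=
  if ∀ j ∈ A, v (A.erase j) < v A then v A else ⊥

open Finset

section

variable {N : Type*} [Fintype N] [DecidableEq N] {L : Type*} [LinearOrder L] [OrderBot L]

theorem mstar_le (v : Finset N → L) (A : Finset N) : mstar v A ≤ v A := by
  unfold mstar
  split_ifs
  exacts [le_rfl, bot_le]

theorem exists_subset_le_mstar (v : Finset N → L) (A : Finset N) :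
    ∃ B ⊆ A, v A ≤ mstar v B := by
  obtain ⟨B, hBA, hB⟩ := exists_minimal_le_of_wellFoundedLT (fun B => v A ≤ v B) A le_rfl
  have hstrict : ∀ j ∈ B, v (B.erase j) < v B := fun j hj =>
    lt_of_not_ge fun hle => hB.not_prop_of_lt (erase_ssubset hj) (hB.prop.trans hle)
  refine ⟨B, hBA, ?_⟩
  rw [mstar, if_pos hstrict]
  exact hB.prop

theorem sup_powerset_inf_eq_of_mstar_le_of_le (v m : Finset N → L) (g : Finset N → L)
    (hg : Antitone g) (hm_ge : ∀ A, mstar v A ≤ m A) (hm_le : ∀ A, m A ≤ v A) (s : Finset N) :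
    s.powerset.sup (fun A => g A ⊓ v A) = s.powerset.sup (fun A => g A ⊓ m A) := by
  refine le_antisymm (Finset.sup_le fun A hA => ?_)
    (sup_mono_fun fun A _ => inf_le_inf_left _ (hm_le A))
  obtain ⟨B, hBA, hvB⟩ := exists_subset_le_mstar v A
  calc g A ⊓ v A ≤ g B ⊓ m B := inf_le_inf (hg hBA) (hvB.trans (hm_ge B))
    _ ≤ _ := le_sup (f := fun A => g A ⊓ m A) (mem_powerset.2 (hBA.trans (mem_powerset.1 hA)))

end

theorem sugeno_mstar_representation_general
    {N : Type*} [Fintype N] [DecidableEq N]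
    {L : Type*} [LinearOrder L] [BoundedOrder L]
    (v : Finset N → L)
    (f : N → L) :
    Finset.univ.powerset.sup (fun A : Finset N => A.inf f ⊓ v A) =
      Finset.univ.powerset.sup (fun A : Finset N => A.inf f ⊓ mstar v A) :=
  sup_powerset_inf_eq_of_mstar_le_of_le v (mstar v) (fun A => A.inf f)
    (fun _ _ h => inf_mono h) (fun _ => le_rfl) (mstar_le v) univ

/-- the Sugeno integral is unchanged when the upper Möbius
transform m^* = v is replaced by the lower Möbius transform m_*. -/
theorem sugeno_mstar_representation
    {N : Type*} [Fintype N] [DecidableEq N]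
    {L : Type*} [LinearOrder L] [BoundedOrder L]
    (v : Finset N → L)
    (hempty : v ∅ = ⊥) (hfull : v Finset.univ = ⊤)
    (hmono : ∀ A B : Finset N, A ⊆ B → v A ≤ v B)
    (f : N → L) :
    Finset.univ.powerset.sup (fun A : Finset N => A.inf f ⊓ v A) =
      Finset.univ.powerset.sup (fun A : Finset N => A.inf f ⊓ mstar v A) :=
  sugeno_mstar_representation_general v f
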